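/- For every continuous function u : ℝⁿ → ℝ vanishing at infinity, the convolution operators S_t u := ρ̃_{1/t} ∗ u converge to u uniformly as t → 0⁺, i.e. lim_{t→0⁺} sup_{x∈ℝⁿ} |∫_{ℝⁿ} ρ̃_{1/t}(ξ) u(x − ξ) dξ − u(x)| = 0. -/

import Mathlib

open MeasureTheory Real Filter Topology

/-- `Q(t,ξ) := ∫₀ᵗ q(τ,ξ) dτ`. -/
noncomputable def Qint {n : ℕ} (q : ℝ → EuclideanSpace ℝ (Fin n) → ℝ)
    (t : ℝ) (ξ : EuclideanSpace ℝ (Fin n)) : ℝ :=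
  ∫ τ in (0:ℝ)..t, q τ ξ

/-- The probability density `ρ̃_t(ξ) = e^{-Q(t,ξ)} / ∫ e^{-Q(t,ζ)} dζ`. -/
noncomputable def rhoDens {n : ℕ} (q : ℝ → EuclideanSpace ℝ (Fin n) → ℝ)
    (t : ℝ) (ξ : EuclideanSpace ℝ (Fin n)) : ℝ :=
  Real.exp (-(Qint q t ξ)) / ∫ ζ, Real.exp (-(Qint q t ζ))

/-!
The kernel `ρ̃_s` is a Gibbs density `e^{-Q_s} / Z_s` with `s κ₀ ψ ≤ Q_s ≤ s κ₁ ψ`. Off a ball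
`|ξ| < δ` one has `ψ ≥ m > 0`, while `κ₁ ψ < κ₀ m / 2` on a small ball around `0`; comparing the
two, the mass of `ρ̃_s` outside `|ξ| < δ` is `O(e^{-s κ₀ m / 2})`. A family of probability
densities concentrating at `0` in this sense is an approximate identity: for `u` bounded by `M`
and `ε`-continuous at scale `δ`, `|ρ̃_s ∗ u - u| ≤ ε + 2M ρ̃_s{|ξ| ≥ δ}` uniformly in `x`.
-/

open Set
open scoped ENNReal

theorem exists_pos_forall_le_of_tendsto_cocompact {X : Type*} [TopologicalSpace X] {ψ : X → ℝ}
    {F : Set X} (hψ : Continuous ψ) (hlim : Tendsto ψ (cocompact X) atTop) (hF : IsClosed F)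
    (hpos : ∀ x ∈ F, 0 < ψ x) : ∃ m > 0, ∀ x ∈ F, m ≤ ψ x := by
  obtain ⟨K, hK, hKψ⟩ := hasBasis_cocompact.eventually_iff.1 (hlim.eventually_ge_atTop 1)
  obtain ⟨a, ha, haψ⟩ :=
    (hK.inter_left hF).exists_forall_le' hψ.continuousOn fun x hx => hpos x hx.1
  refine ⟨min a 1, lt_min ha one_pos, fun x hx => ?_⟩
  by_cases hxK : x ∈ K
  · exact (min_le_left _ _).trans (haψ x ⟨hx, hxK⟩)
  · exact (min_le_right _ _).trans (hKψ hxK)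

section ApproximateIdentity

variable {E : Type*} [NormedAddCommGroup E] [MeasurableSpace E] [OpensMeasurableSpace E]
  {μ : Measure E}

theorem abs_integral_mul_le_of_abs_le {ρ f : E → ℝ} {C η δ : ℝ} (hρ : ∀ ξ, 0 ≤ ρ ξ)
    (hρ_int : Integrable ρ μ) (hρ_one : ∫ ξ, ρ ξ ∂μ = 1) (hf : AEStronglyMeasurable f μ)
    (hfC : ∀ ξ, |f ξ| ≤ C) (hη : 0 ≤ η) (hfη : ∀ ξ, ‖ξ‖ < δ → |f ξ| ≤ η) :
    |∫ ξ, ρ ξ * f ξ ∂μ| ≤ η + C * ∫ ξ in {ξ | δ ≤ ‖ξ‖}, ρ ξ ∂μ := by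
  set S := {ξ : E | δ ≤ ‖ξ‖}
  have hS : MeasurableSet S := measurableSet_le measurable_const measurable_norm
  have hpt : ∀ ξ, ρ ξ * |f ξ| ≤ η * ρ ξ + C * S.indicator ρ ξ := by
    intro ξ
    by_cases hξ : ξ ∈ S
    · rw [indicator_of_mem hξ]
      nlinarith [mul_le_mul_of_nonneg_left (hfC ξ) (hρ ξ), mul_nonneg hη (hρ ξ)]
    · rw [indicator_of_notMem hξ, mul_zero, add_zero, mul_comm η]
      exact mul_le_mul_of_nonneg_left (hfη ξ (not_le.1 hξ)) (hρ ξ)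
  have hρf : Integrable (fun ξ => ρ ξ * |f ξ|) μ :=
    hρ_int.mul_bdd (continuous_abs.comp_aestronglyMeasurable hf)
      (Eventually.of_forall fun ξ => by simpa using hfC ξ)
  calc |∫ ξ, ρ ξ * f ξ ∂μ| ≤ ∫ ξ, |ρ ξ * f ξ| ∂μ := abs_integral_le_integral_abs
    _ = ∫ ξ, ρ ξ * |f ξ| ∂μ := by simp_rw [abs_mul, abs_of_nonneg (hρ _)]
    _ ≤ ∫ ξ, (η * ρ ξ + C * S.indicator ρ ξ) ∂μ :=
        integral_mono hρf ((hρ_int.const_mul η).add ((hρ_int.indicator hS).const_mul C)) hpt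
    _ = η + C * ∫ ξ in S, ρ ξ ∂μ := by
        rw [integral_add (hρ_int.const_mul _) ((hρ_int.indicator hS).const_mul _),
          integral_const_mul, integral_const_mul, hρ_one, mul_one, integral_indicator hS]

theorem abs_integral_mul_comp_sub_sub_le {ρ u : E → ℝ} {M η δ : ℝ} (hρ : ∀ ξ, 0 ≤ ρ ξ)
    (hρ_int : Integrable ρ μ) (hρ_one : ∫ ξ, ρ ξ ∂μ = 1) (hu : Continuous u)
    (huM : ∀ y, |u y| ≤ M) (hη : 0 ≤ η) (x : E) (huη : ∀ ξ, ‖ξ‖ < δ → |u (x - ξ) - u x| ≤ η) :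
    |∫ ξ, ρ ξ * u (x - ξ) ∂μ - u x| ≤ η + 2 * M * ∫ ξ in {ξ | δ ≤ ‖ξ‖}, ρ ξ ∂μ := by
  have hux : Continuous fun ξ => u (x - ξ) := hu.comp (continuous_const.sub continuous_id)
  have hρu : Integrable (fun ξ => ρ ξ * u (x - ξ)) μ :=
    hρ_int.mul_bdd hux.aestronglyMeasurable (Eventually.of_forall fun ξ => huM (x - ξ))
  have hsplit : ∫ ξ, ρ ξ * u (x - ξ) ∂μ - u x = ∫ ξ, ρ ξ * (u (x - ξ) - u x) ∂μ := by
    simp_rw [mul_sub]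
    rw [integral_sub hρu (hρ_int.mul_const _), integral_mul_const, hρ_one, one_mul]
  rw [hsplit]
  refine abs_integral_mul_le_of_abs_le hρ hρ_int hρ_one
    (hux.sub continuous_const).aestronglyMeasurable (fun ξ => ?_) hη huη
  linarith [abs_sub (u (x - ξ)) (u x), huM (x - ξ), huM x]

theorem tendsto_iSup_abs_integral_mul_comp_sub_sub {ι : Type*} {l : Filter ι} {ρ : ι → E → ℝ}
    (hρ : ∀ᶠ i in l, (∀ ξ, 0 ≤ ρ i ξ) ∧ Integrable (ρ i) μ ∧ ∫ ξ, ρ i ξ ∂μ = 1)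
    (htail : ∀ δ > 0, Tendsto (fun i => ∫ ξ in {ξ | δ ≤ ‖ξ‖}, ρ i ξ ∂μ) l (𝓝 0))
    {u : E → ℝ} {M : ℝ} (hu : UniformContinuous u) (huM : ∀ y, |u y| ≤ M) :
    Tendsto (fun i => ⨆ x, |∫ ξ, ρ i ξ * u (x - ξ) ∂μ - u x|) l (𝓝 0) := by
  refine Metric.tendsto_nhds.2 fun ε hε => ?_
  obtain ⟨δ, hδ, huδ⟩ := Metric.uniformContinuous_iff.1 hu (ε / 2) (half_pos hε)
  have hsmall : ∀ᶠ i in l, 2 * M * ∫ ξ in {ξ | δ ≤ ‖ξ‖}, ρ i ξ ∂μ < ε / 2 :=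
    ((htail δ hδ).const_mul (2 * M)).eventually_lt_const (by simpa using half_pos hε)
  filter_upwards [hρ, hsmall] with i ⟨hρ0, hρ_int, hρ_one⟩ hi
  have hbound : ∀ x, |∫ ξ, ρ i ξ * u (x - ξ) ∂μ - u x| ≤
      ε / 2 + 2 * M * ∫ ξ in {ξ | δ ≤ ‖ξ‖}, ρ i ξ ∂μ := fun x =>
    abs_integral_mul_comp_sub_sub_le hρ0 hρ_int hρ_one hu.continuous huM (half_pos hε).le x
      fun ξ hξ => (huδ (by simpa [dist_eq_norm] using hξ)).le
  rw [Real.dist_eq, sub_zero, abs_of_nonneg (Real.iSup_nonneg fun _ => abs_nonneg _)]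
  exact (ciSup_le hbound).trans_lt (by linarith)

end ApproximateIdentity

section GibbsTail

variable {α : Type*} [MeasurableSpace α] {μ : Measure α}

theorem setIntegral_exp_neg_le_exp_neg_mul_integral {φ Q : α → ℝ} {S : Set α} {c : ℝ}
    (hS : MeasurableSet S) (hQ_int : Integrable (fun x => exp (-Q x)) μ)
    (hφ_int : Integrable (fun x => exp (-φ x)) μ) (hQ : ∀ x ∈ S, c + φ x ≤ Q x) :
    ∫ x in S, exp (-Q x) ∂μ ≤ exp (-c) * ∫ x, exp (-φ x) ∂μ :=
  calc ∫ x in S, exp (-Q x) ∂μ ≤ ∫ x in S, exp (-c) * exp (-φ x) ∂μ :=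
        setIntegral_mono_on hQ_int.integrableOn (hφ_int.const_mul _).integrableOn hS
          fun x hx => by rw [← exp_add, exp_le_exp]; linarith [hQ x hx]
    _ = exp (-c) * ∫ x in S, exp (-φ x) ∂μ := integral_const_mul _ _
    _ ≤ exp (-c) * ∫ x, exp (-φ x) ∂μ := mul_le_mul_of_nonneg_left
        (setIntegral_le_integral hφ_int (Eventually.of_forall fun _ => (exp_pos _).le))
        (exp_pos _).le

theorem measureReal_mul_exp_neg_le_integral_exp_neg {Q : α → ℝ} {B : Set α} {c : ℝ}
    (hB : MeasurableSet B) (hμB : μ B ≠ ∞) (hQ_int : Integrable (fun x => exp (-Q x)) μ)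
    (hQ : ∀ x ∈ B, Q x ≤ c) :
    μ.real B * exp (-c) ≤ ∫ x, exp (-Q x) ∂μ :=
  calc μ.real B * exp (-c) = exp (-c) * μ.real B := mul_comm _ _
    _ ≤ ∫ x in B, exp (-Q x) ∂μ := setIntegral_ge_of_const_le_real hB hμB
        (fun x hx => exp_le_exp.2 (neg_le_neg (hQ x hx))) hQ_int.integrableOn
    _ ≤ ∫ x, exp (-Q x) ∂μ :=
        setIntegral_le_integral hQ_int (Eventually.of_forall fun _ => (exp_pos _).le)

theorem tendsto_setIntegral_exp_neg_div_integral_exp_neg {φ₀ φ₁ : α → ℝ} {Q : ℝ → α → ℝ}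
    {S B : Set α} {a b : ℝ} (hφ₀_int : Integrable (fun x => exp (-φ₀ x)) μ)
    (hQ_int : ∀ᶠ s in atTop, Integrable (fun x => exp (-Q s x)) μ)
    (hQ : ∀ᶠ s in atTop, ∀ x, s * φ₀ x ≤ Q s x ∧ Q s x ≤ s * φ₁ x)
    (hS : MeasurableSet S) (haS : ∀ x ∈ S, a ≤ φ₀ x)
    (hB : MeasurableSet B) (hμB : μ B ≠ ∞) (hμB₀ : μ B ≠ 0) (hbB : ∀ x ∈ B, φ₁ x ≤ b)
    (hba : b < a) :
    Tendsto (fun s => (∫ x in S, exp (-Q s x) ∂μ) / ∫ x, exp (-Q s x) ∂μ) atTop (𝓝 0) := by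
  have hB_pos : 0 < μ.real B := ENNReal.toReal_pos hμB₀ hμB
  set C := exp a * (∫ x, exp (-φ₀ x) ∂μ) / μ.real B
  have hdecay : Tendsto (fun s => C * exp (-((a - b) * s))) atTop (𝓝 0) := by
    simpa using (tendsto_exp_neg_atTop_nhds_zero.comp
      (tendsto_id.const_mul_atTop (sub_pos.2 hba))).const_mul C
  refine squeeze_zero' (Eventually.of_forall fun s => div_nonneg
      (setIntegral_nonneg hS fun _ _ => (exp_pos _).le)
      (integral_nonneg fun _ => (exp_pos _).le)) ?_ hdecay
  filter_upwards [hQ_int, hQ, eventually_ge_atTop 1] with s hs_int hs_Q hs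
  have hnum : ∫ x in S, exp (-Q s x) ∂μ ≤ exp (-((s - 1) * a)) * ∫ x, exp (-φ₀ x) ∂μ :=
    setIntegral_exp_neg_le_exp_neg_mul_integral hS hs_int hφ₀_int fun x hx => by
      nlinarith [(hs_Q x).1, haS x hx]
  have hden : μ.real B * exp (-(s * b)) ≤ ∫ x, exp (-Q s x) ∂μ :=
    measureReal_mul_exp_neg_le_integral_exp_neg hB hμB hs_int fun x hx => by
      nlinarith [(hs_Q x).2, hbB x hx]
  calc (∫ x in S, exp (-Q s x) ∂μ) / ∫ x, exp (-Q s x) ∂μ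
      ≤ exp (-((s - 1) * a)) * (∫ x, exp (-φ₀ x) ∂μ) / (μ.real B * exp (-(s * b))) :=
        div_le_div₀ (by positivity) hnum (by positivity) hden
    _ = C * exp (-((a - b) * s)) := by
        have hexp : exp (-((s - 1) * a)) = exp a * exp (-((a - b) * s)) * exp (-(s * b)) := by
          rw [← exp_add, ← exp_add]; ring_nf
        simp only [hexp, C]
        field_simp

end GibbsTail

theorem intervalIntegral_mem_Icc_of_forall_mem_Icc {f : ℝ → ℝ} {a b s : ℝ} (hs : 0 ≤ s)
    (hf : Measurable f) (hab : ∀ τ ∈ Icc 0 s, f τ ∈ Icc a b) :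
    ∫ τ in 0..s, f τ ∈ Icc (s * a) (s * b) := by
  have hfi : IntervalIntegrable f volume 0 s := by
    rw [intervalIntegrable_iff_integrableOn_Icc_of_le hs]
    refine Measure.integrableOn_of_bounded (M := max |a| |b|) measure_Icc_lt_top.ne
      hf.aestronglyMeasurable ?_
    filter_upwards [ae_restrict_mem measurableSet_Icc] with τ hτ
    exact abs_le_max_abs_abs (hab τ hτ).1 (hab τ hτ).2
  constructor
  · simpa [mul_comm] using intervalIntegral.integral_mono_on hs intervalIntegrable_const hfi
      fun τ hτ => (hab τ hτ).1
  · simpa [mul_comm] using intervalIntegral.integral_mono_on hs hfi intervalIntegrable_const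
      fun τ hτ => (hab τ hτ).2

section RhoDens

variable {n : ℕ} {q : ℝ → EuclideanSpace ℝ (Fin n) → ℝ}

theorem qint_mem_Icc {ψ : EuclideanSpace ℝ (Fin n) → ℝ}
    (hq_meas : Measurable fun p : ℝ × EuclideanSpace ℝ (Fin n) => q p.1 p.2) {κ₀ κ₁ : ℝ}
    (hq_bound : ∀ τ, 0 ≤ τ → ∀ ξ, κ₀ * ψ ξ ≤ q τ ξ ∧ q τ ξ ≤ κ₁ * ψ ξ) {s : ℝ} (hs : 0 ≤ s)
    (ξ : EuclideanSpace ℝ (Fin n)) :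
    Qint q s ξ ∈ Icc (s * (κ₀ * ψ ξ)) (s * (κ₁ * ψ ξ)) :=
  intervalIntegral_mem_Icc_of_forall_mem_Icc hs
    (hq_meas.comp (measurable_id.prodMk measurable_const)) fun τ hτ => hq_bound τ hτ.1 ξ

theorem measurable_qint (hq_meas : Measurable fun p : ℝ × EuclideanSpace ℝ (Fin n) => q p.1 p.2)
    (s : ℝ) : Measurable (Qint q s) := by
  -- `∫ τ in 0..s` unfolds to the integral over `Ioc 0 s` minus the integral over `Ioc s 0`.
  have h : StronglyMeasurable (Function.uncurry fun ξ τ => q τ ξ) :=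
    (hq_meas.comp measurable_swap).stronglyMeasurable
  exact (h.integral_prod_right (ν := volume.restrict (Ioc 0 s))).measurable.sub
    (h.integral_prod_right (ν := volume.restrict (Ioc s 0))).measurable

theorem integrable_exp_neg_qint {ψ : EuclideanSpace ℝ (Fin n) → ℝ}
    (hψ_int : ∀ c : ℝ, 0 < c → Integrable (fun ξ => exp (-(c * ψ ξ))))
    (hq_meas : Measurable fun p : ℝ × EuclideanSpace ℝ (Fin n) => q p.1 p.2) {κ₀ κ₁ : ℝ}
    (hκ₀ : 0 < κ₀) (hq_bound : ∀ τ, 0 ≤ τ → ∀ ξ, κ₀ * ψ ξ ≤ q τ ξ ∧ q τ ξ ≤ κ₁ * ψ ξ)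
    {s : ℝ} (hs : 0 < s) : Integrable fun ξ => exp (-Qint q s ξ) :=
  (hψ_int (s * κ₀) (by positivity)).mono'
    (measurable_exp.comp (measurable_qint hq_meas s).neg).aestronglyMeasurable
    (Eventually.of_forall fun ξ => by
      rw [norm_of_nonneg (exp_pos _).le, exp_le_exp, mul_assoc]
      linarith [(qint_mem_Icc hq_meas hq_bound hs.le ξ).1])

theorem rhoDens_nonneg (s : ℝ) (ξ : EuclideanSpace ℝ (Fin n)) : 0 ≤ rhoDens q s ξ :=
  div_nonneg (exp_pos _).le (integral_nonneg fun _ => (exp_pos _).le)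

theorem integral_rhoDens {s : ℝ} (h : Integrable fun ξ => exp (-Qint q s ξ)) :
    ∫ ξ, rhoDens q s ξ = 1 := by
  simp only [rhoDens]
  rw [integral_div, div_self (integral_exp_pos h).ne']

theorem setIntegral_rhoDens (s : ℝ) (S : Set (EuclideanSpace ℝ (Fin n))) :
    ∫ ξ in S, rhoDens q s ξ = (∫ ξ in S, exp (-Qint q s ξ)) / ∫ ξ, exp (-Qint q s ξ) :=
  integral_div _ _

theorem tendsto_setIntegral_rhoDens_atTop {ψ : EuclideanSpace ℝ (Fin n) → ℝ}
    (hψ_cont : Continuous ψ) (hψ_pos : ∀ ξ, ξ ≠ 0 → 0 < ψ ξ)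
    (hψ_infty : Tendsto ψ (cocompact (EuclideanSpace ℝ (Fin n))) atTop) (hψ0 : ψ 0 ≤ 0)
    (hψ_int : ∀ c : ℝ, 0 < c → Integrable (fun ξ => exp (-(c * ψ ξ))))
    (hq_meas : Measurable fun p : ℝ × EuclideanSpace ℝ (Fin n) => q p.1 p.2) {κ₀ κ₁ : ℝ}
    (hκ₀ : 0 < κ₀) (hκ₁ : 0 ≤ κ₁)
    (hq_bound : ∀ τ, 0 ≤ τ → ∀ ξ, κ₀ * ψ ξ ≤ q τ ξ ∧ q τ ξ ≤ κ₁ * ψ ξ) {δ : ℝ} (hδ : 0 < δ) :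
    Tendsto (fun s => ∫ ξ in {ξ | δ ≤ ‖ξ‖}, rhoDens q s ξ) atTop (𝓝 0) := by
  have hS : IsClosed {ξ : EuclideanSpace ℝ (Fin n) | δ ≤ ‖ξ‖} :=
    isClosed_le continuous_const continuous_norm
  obtain ⟨m, hm, hmψ⟩ := exists_pos_forall_le_of_tendsto_cocompact hψ_cont hψ_infty hS
    fun ξ hξ => hψ_pos ξ (norm_pos_iff.1 (hδ.trans_le hξ))
  have hψ_small : ∀ᶠ ξ in 𝓝 0, κ₁ * ψ ξ < κ₀ * m / 2 :=
    ((hψ_cont.tendsto 0).const_mul κ₁).eventually_lt_const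
      (by nlinarith [mul_nonpos_of_nonneg_of_nonpos hκ₁ hψ0])
  obtain ⟨r, hr, hball⟩ := Metric.eventually_nhds_iff_ball.1 hψ_small
  simp_rw [setIntegral_rhoDens]
  exact tendsto_setIntegral_exp_neg_div_integral_exp_neg (φ₁ := fun ξ => κ₁ * ψ ξ)
    (by simpa using hψ_int κ₀ hκ₀)
    ((eventually_gt_atTop 0).mono fun s hs =>
      integrable_exp_neg_qint hψ_int hq_meas hκ₀ hq_bound hs)
    ((eventually_ge_atTop 0).mono fun s hs => qint_mem_Icc hq_meas hq_bound hs)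
    hS.measurableSet (fun ξ hξ => mul_le_mul_of_nonneg_left (hmψ ξ hξ) hκ₀.le)
    measurableSet_ball measure_ball_lt_top.ne (Metric.measure_ball_pos _ _ hr).ne'
    (fun ξ hξ => (hball ξ hξ).le) (half_lt_self (by positivity))

end RhoDens

theorem stmt6_general {n : ℕ}
    (ψ : EuclideanSpace ℝ (Fin n) → ℝ) (hψ_cont : Continuous ψ)
    (hψ_pos : ∀ ξ, ξ ≠ 0 → 0 < ψ ξ)
    (hψ_infty : Tendsto ψ (cocompact (EuclideanSpace ℝ (Fin n))) atTop)
    (hψ_growth : ∀ ε : ℝ, 0 < ε → ∃ Cε : ℝ, 0 ≤ Cε ∧ ∀ ξ, ψ ξ ≤ Cε * ‖ξ‖ ^ 2 + ε)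
    (hψ_int : ∀ c : ℝ, 0 < c → Integrable (fun ξ => Real.exp (-(c * ψ ξ))))
    (q : ℝ → EuclideanSpace ℝ (Fin n) → ℝ)
    (hq_meas : Measurable (fun p : ℝ × EuclideanSpace ℝ (Fin n) => q p.1 p.2))
    (κ₀ κ₁ : ℝ) (hκ₀ : 0 < κ₀) (hκ : κ₀ ≤ κ₁)
    (hq_bound : ∀ τ, 0 ≤ τ → ∀ ξ, κ₀ * ψ ξ ≤ q τ ξ ∧ q τ ξ ≤ κ₁ * ψ ξ)
    (u : EuclideanSpace ℝ (Fin n) → ℝ) (hu_cont : Continuous u)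
    (hu_zero : Tendsto u (cocompact (EuclideanSpace ℝ (Fin n))) (𝓝 0)) :
    Tendsto (fun t => ⨆ x, |(∫ ξ, rhoDens q (1 / t) ξ * u (x - ξ)) - u x|)
      (𝓝[>] (0:ℝ)) (𝓝 0) := by
  have hψ0 : ψ 0 ≤ 0 := le_of_forall_pos_le_add fun ε hε => by
    obtain ⟨C, -, hC⟩ := hψ_growth ε hε
    simpa using hC 0
  have hρ : ∀ᶠ s in atTop, (∀ ξ, 0 ≤ rhoDens q s ξ) ∧ Integrable (rhoDens q s) ∧
      ∫ ξ, rhoDens q s ξ = 1 := by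
    filter_upwards [eventually_gt_atTop 0] with s hs
    have h := integrable_exp_neg_qint hψ_int hq_meas hκ₀ hq_bound hs
    exact ⟨rhoDens_nonneg s, h.div_const _, integral_rhoDens h⟩
  have htail := fun δ (hδ : 0 < δ) => tendsto_setIntegral_rhoDens_atTop hψ_cont hψ_pos hψ_infty
    hψ0 hψ_int hq_meas hκ₀ (hκ₀.le.trans hκ) hq_bound hδ
  obtain ⟨M, hM⟩ : ∃ M, ∀ x, |u x| ≤ M :=
    ⟨_, (ZeroAtInftyContinuousMap.toBCF ⟨⟨u, hu_cont⟩, hu_zero⟩).norm_coe_le_norm⟩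
  have hconv := tendsto_iSup_abs_integral_mul_comp_sub_sub hρ htail
    (hu_cont.uniformContinuous_of_tendsto_cocompact hu_zero) hM
  exact hconv.comp (tendsto_inv_nhdsGT_zero.congr fun t => (one_div t).symm)

theorem stmt6 {n : ℕ} (hn : 1 ≤ n)
    (ψ : EuclideanSpace ℝ (Fin n) → ℝ) (hψ_cont : Continuous ψ)
    (hψ_pos : ∀ ξ, ξ ≠ 0 → 0 < ψ ξ)
    (hψ_infty : Tendsto ψ (cocompact (EuclideanSpace ℝ (Fin n))) atTop)
    (hψ_growth : ∀ ε : ℝ, 0 < ε → ∃ Cε : ℝ, 0 ≤ Cε ∧ ∀ ξ, ψ ξ ≤ Cε * ‖ξ‖ ^ 2 + ε)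
    (hψ_int : ∀ c : ℝ, 0 < c → Integrable (fun ξ => Real.exp (-(c * ψ ξ))))
    (q : ℝ → EuclideanSpace ℝ (Fin n) → ℝ)
    (hq_meas : Measurable (fun p : ℝ × EuclideanSpace ℝ (Fin n) => q p.1 p.2))
    (κ₀ κ₁ : ℝ) (hκ₀ : 0 < κ₀) (hκ : κ₀ ≤ κ₁)
    (hq_bound : ∀ τ, 0 ≤ τ → ∀ ξ, κ₀ * ψ ξ ≤ q τ ξ ∧ q τ ξ ≤ κ₁ * ψ ξ)
    (u : EuclideanSpace ℝ (Fin n) → ℝ) (hu_cont : Continuous u)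
    (hu_zero : Tendsto u (cocompact (EuclideanSpace ℝ (Fin n))) (𝓝 0)) :
    Tendsto (fun t => ⨆ x, |(∫ ξ, rhoDens q (1 / t) ξ * u (x - ξ)) - u x|)
      (𝓝[>] (0:ℝ)) (𝓝 0) :=
  stmt6_general ψ hψ_cont hψ_pos hψ_infty hψ_growth hψ_int q hq_meas κ₀ κ₁ hκ₀ hκ hq_bound u hu_cont
    hu_zero
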